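/- Let γ > 1, and suppose W : ℝⁿ → (0, ∞) satisfies W(x) ≥ A·|x|^γ for some A > 0, and g : ℝⁿ → (0, ∞) is C¹ with |∇g(x)| ≤ B·(|x|^(γ−1) + 1) and g(x) ≥ C·(|x|^γ + 1) for positive constants B, C. Then there exist constants C₁, C₂, h₁ > 0 such that for all h ∈ (0, h₁) and all x ∈ ℝⁿ: −C₁·h·(1 + |x|^γ) ≤ Q_h(g)(x) − g(x) ≤ C₂·h·(|x|^(γ−1) + 1), where Q_h(g)(x) = inf_{y} { g(x−y) + h·W(y/h) }. -/

import Mathlib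

/-! Taking `y = 0` in the infimum gives the upper bound. For the lower bound, the mean value
theorem bounds `g x - g (x - y)` by `K ((‖x‖ ^ (γ - 1) + 1) ‖y‖ + ‖y‖ ^ γ)`, while the penalty
`h W (y / h)` is at least `A h ‖y / h‖ ^ γ`. In the variable `t = ‖y / h‖` the term `‖y‖ ^ γ`
of the increment carries an extra factor `h ^ (γ - 1)`, so it is absorbed by half of the penalty
for small `h`; the elementary inequality `a t ≤ t ^ γ + a ^ (γ / (γ - 1))` absorbs the remaining
linear term into the other half, at the cost of
`h (‖x‖ ^ (γ - 1) + 1) ^ (γ / (γ - 1)) ≲ h (1 + ‖x‖ ^ γ)`. -/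

open Real Metric

theorem Real.add_rpow_le_two_rpow_mul_add_rpow {u v p : ℝ} (hu : 0 ≤ u) (hv : 0 ≤ v)
    (hp : 0 ≤ p) : (u + v) ^ p ≤ 2 ^ p * (u ^ p + v ^ p) := by
  wlog huv : u ≤ v generalizing u v
  · rw [add_comm u, add_comm (u ^ p)]
    exact this hv hu (le_of_not_ge huv)
  calc (u + v) ^ p ≤ (2 * v) ^ p := by gcongr; linarith
    _ = 2 ^ p * v ^ p := mul_rpow zero_le_two hv
    _ ≤ 2 ^ p * (u ^ p + v ^ p) := by gcongr; exact le_add_of_nonneg_left (by positivity)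

theorem Real.mul_le_rpow_add_rpow_div_sub_one {a t γ : ℝ} (ha : 0 ≤ a) (ht : 0 ≤ t)
    (hγ : 1 < γ) : a * t ≤ t ^ γ + a ^ (γ / (γ - 1)) := by
  have hp : 0 < γ - 1 := sub_pos.2 hγ
  rcases le_or_gt a (t ^ (γ - 1)) with hat | hta
  · calc a * t ≤ t ^ (γ - 1) * t := by gcongr
      _ = t ^ γ := by rw [← rpow_add_one' ht (by linarith), sub_add_cancel]
      _ ≤ _ := le_add_of_nonneg_right (by positivity)
  · have hta' : t ≤ a ^ (γ - 1)⁻¹ := by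
      calc t = (t ^ (γ - 1)) ^ (γ - 1)⁻¹ := (rpow_rpow_inv ht hp.ne').symm
        _ ≤ a ^ (γ - 1)⁻¹ := by gcongr
    calc a * t ≤ a * a ^ (γ - 1)⁻¹ := by gcongr
      _ = a ^ (γ / (γ - 1)) := by
        rw [← rpow_one_add' ha (by positivity)]
        congr 1
        field_simp
        ring
      _ ≤ _ := le_add_of_nonneg_left (by positivity)

theorem sub_le_of_norm_fderiv_le_rpow {E : Type*} [NormedAddCommGroup E] [NormedSpace ℝ E]
    {f : E → ℝ} {B γ : ℝ} (hf : Differentiable ℝ f) (hB : 0 ≤ B) (hγ : 1 ≤ γ)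
    (hf' : ∀ z, ‖fderiv ℝ f z‖ ≤ B * (‖z‖ ^ (γ - 1) + 1)) (x y : E) :
    f x - f (x - y) ≤ B * 2 ^ (γ - 1) * ((‖x‖ ^ (γ - 1) + 1) * ‖y‖ + ‖y‖ ^ γ) := by
  have hp : 0 ≤ γ - 1 := sub_nonneg.2 hγ
  have hball : ∀ z ∈ closedBall (0 : E) (‖x‖ + ‖y‖),
      ‖fderiv ℝ f z‖ ≤ B * 2 ^ (γ - 1) * (‖x‖ ^ (γ - 1) + 1 + ‖y‖ ^ (γ - 1)) := by
    intro z hz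
    rw [mem_closedBall_zero_iff] at hz
    have hone : (1 : ℝ) ≤ 2 ^ (γ - 1) := one_le_rpow one_le_two hp
    have hsplit := add_rpow_le_two_rpow_mul_add_rpow (norm_nonneg x) (norm_nonneg y) hp
    have hmono : ‖z‖ ^ (γ - 1) ≤ (‖x‖ + ‖y‖) ^ (γ - 1) := by gcongr
    calc ‖fderiv ℝ f z‖ ≤ B * (‖z‖ ^ (γ - 1) + 1) := hf' z
      _ ≤ _ := by rw [mul_assoc]; gcongr; linarith
  have hmvt := (convex_closedBall (0 : E) _).norm_image_sub_le_of_norm_fderiv_le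
    (fun z _ => hf z) hball
    (mem_closedBall_zero_iff.2 (norm_sub_le x y))
    (mem_closedBall_zero_iff.2 (le_add_of_nonneg_right (norm_nonneg y)))
  have hy : ‖y‖ ^ (γ - 1) * ‖y‖ = ‖y‖ ^ γ := by
    rw [← rpow_add_one' (norm_nonneg y) (by linarith), sub_add_cancel]
  rw [sub_sub_cancel] at hmvt
  calc f x - f (x - y) ≤ ‖f x - f (x - y)‖ := le_abs_self _
    _ ≤ _ := hmvt
    _ = _ := by rw [← hy]; ring

theorem exists_increment_le_scaled_penalty {γ A K : ℝ} (hγ : 1 < γ) (hA : 0 < A) (hK : 0 < K) :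
    ∃ C > 0, ∀ h t u : ℝ, 0 < h → 0 ≤ t → 0 ≤ u → K * h ^ (γ - 1) ≤ A / 2 →
      K * ((u ^ (γ - 1) + 1) * (h * t) + (h * t) ^ γ) ≤ h * (A * t ^ γ + C * (1 + u ^ γ)) := by
  set q := γ / (γ - 1)
  refine ⟨A / 2 * (4 * K / A) ^ q, by positivity, fun h t u hh ht hu hsmall => ?_⟩
  set a := 2 * K / A * (u ^ (γ - 1) + 1)
  have hyoung := mul_le_rpow_add_rpow_div_sub_one (a := a) (by positivity) ht hγ
  have ha : a ^ q ≤ (4 * K / A) ^ q * (1 + u ^ γ) := by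
    have hq : 0 ≤ q := div_nonneg (by linarith) (by linarith)
    calc a ^ q = (2 * K / A) ^ q * (u ^ (γ - 1) + 1) ^ q := mul_rpow (by positivity) (by positivity)
      _ ≤ (2 * K / A) ^ q * (2 ^ q * ((u ^ (γ - 1)) ^ q + 1 ^ q)) := by
        gcongr; exact add_rpow_le_two_rpow_mul_add_rpow (by positivity) zero_le_one hq
      _ = (4 * K / A) ^ q * (1 + u ^ γ) := by
        have hexp : (γ - 1) * q = γ := mul_div_cancel₀ γ (by linarith)
        rw [← rpow_mul hu, hexp, one_rpow, ← mul_assoc, ← mul_rpow (by positivity) zero_le_two]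
        ring_nf
  have hht : (h * t) ^ γ = h * h ^ (γ - 1) * t ^ γ := by
    rw [mul_rpow hh.le ht, rpow_sub_one hh.ne']
    field_simp
  have hKa : K * (u ^ (γ - 1) + 1) = A / 2 * a := by simp only [a]; field_simp
  calc K * ((u ^ (γ - 1) + 1) * (h * t) + (h * t) ^ γ)
      = h * (A / 2 * (a * t) + K * h ^ (γ - 1) * t ^ γ) := by
        rw [hht]; linear_combination h * t * hKa
    _ ≤ h * (A / 2 * (t ^ γ + (4 * K / A) ^ q * (1 + u ^ γ)) + A / 2 * t ^ γ) := by
      gcongr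
      exact hyoung.trans (by gcongr)
    _ = h * (A * t ^ γ + A / 2 * (4 * K / A) ^ q * (1 + u ^ γ)) := by ring

noncomputable def hopfLax {E : Type*} [AddCommGroup E] [Module ℝ E] (W g : E → ℝ) (h : ℝ)
    (x : E) : ℝ :=
  ⨅ y, g (x - y) + h * W (h⁻¹ • y)

theorem hopfLax_sub_mem_Icc {E : Type*} [AddCommGroup E] [Module ℝ E] {W g : E → ℝ} {h m : ℝ}
    {x : E} (hm : ∀ y, m ≤ g (x - y) + h * W (h⁻¹ • y) - g x) :
    hopfLax W g h x - g x ∈ Set.Icc m (h * W 0) := by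
  have hbdd : BddBelow (Set.range fun y => g (x - y) + h * W (h⁻¹ • y)) :=
    ⟨m + g x, Set.forall_mem_range.2 fun y => by linarith [hm y]⟩
  constructor
  · have := le_ciInf fun y => (by linarith [hm y] : m + g x ≤ g (x - y) + h * W (h⁻¹ • y))
    unfold hopfLax; linarith
  · have := ciInf_le hbdd 0
    simp only [sub_zero, smul_zero] at this
    unfold hopfLax; linarith

theorem hopf_lax_two_sided_bound_general {n : ℕ} (γ : ℝ) (hγ : 1 < γ)
    (W : EuclideanSpace ℝ (Fin n) → ℝ) (hWpos : ∀ x, 0 < W x)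
    (A : ℝ) (hA : 0 < A) (hW : ∀ x, A * ‖x‖ ^ γ ≤ W x)
    (g : EuclideanSpace ℝ (Fin n) → ℝ)
    (hg : ContDiff ℝ 1 g)
    (B : ℝ) (hB : 0 < B) (hgrad : ∀ x, ‖gradient g x‖ ≤ B * (‖x‖ ^ (γ - 1) + 1)) :
    ∃ C₁ > (0:ℝ), ∃ C₂ > (0:ℝ), ∃ h₁ > (0:ℝ), ∀ h ∈ Set.Ioo (0:ℝ) h₁, ∀ x,
      -C₁ * h * (1 + ‖x‖ ^ γ) ≤ (⨅ y, (g (x - y) + h * W (h⁻¹ • y))) - g x ∧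
      (⨅ y, (g (x - y) + h * W (h⁻¹ • y))) - g x ≤ C₂ * h * (‖x‖ ^ (γ - 1) + 1) := by
  set K := B * 2 ^ (γ - 1)
  have hK : 0 < K := by positivity
  have hp : 0 < γ - 1 := sub_pos.2 hγ
  obtain ⟨C₁, hC₁, hpenalty⟩ := exists_increment_le_scaled_penalty hγ hA hK
  have hincrement := sub_le_of_norm_fderiv_le_rpow (hg.differentiable one_ne_zero) hB.le hγ.le
    fun z => ((InnerProductSpace.toDual ℝ _).symm.norm_map (fderiv ℝ g z)).symm.trans_le (hgrad z)
  refine ⟨C₁, hC₁, W 0, hWpos 0, (A / 2 / K) ^ (γ - 1)⁻¹, by positivity, ?_⟩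
  rintro h ⟨hh, hh₁⟩ x
  have hsmall : K * h ^ (γ - 1) ≤ A / 2 := by
    rw [← le_div_iff₀' hK, ← rpow_inv_rpow (by positivity : 0 ≤ A / 2 / K) hp.ne']
    gcongr
  have hlower : ∀ y, -C₁ * h * (1 + ‖x‖ ^ γ) ≤ g (x - y) + h * W (h⁻¹ • y) - g x := by
    intro y
    have hy : ‖y‖ = h * ‖h⁻¹ • y‖ := by
      rw [norm_smul, norm_inv, norm_of_nonneg hh.le, mul_inv_cancel_left₀ hh.ne']
    have hscaled := hpenalty h ‖h⁻¹ • y‖ ‖x‖ hh (norm_nonneg _) (norm_nonneg _) hsmall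
    rw [← hy] at hscaled
    linarith [hincrement x y, mul_le_mul_of_nonneg_left (hW (h⁻¹ • y)) hh.le]
  obtain ⟨hlow, hup⟩ := hopfLax_sub_mem_Icc hlower
  refine ⟨hlow, hup.trans ?_⟩
  rw [mul_comm (W 0)]
  exact le_mul_of_one_le_right (mul_nonneg hh.le (hWpos 0).le)
    (le_add_of_nonneg_left (rpow_nonneg (norm_nonneg x) _))

theorem hopf_lax_two_sided_bound {n : ℕ} (γ : ℝ) (hγ : 1 < γ)
    (W : EuclideanSpace ℝ (Fin n) → ℝ) (hWpos : ∀ x, 0 < W x)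
    (A : ℝ) (hA : 0 < A) (hW : ∀ x, A * ‖x‖ ^ γ ≤ W x)
    (g : EuclideanSpace ℝ (Fin n) → ℝ) (hgpos : ∀ x, 0 < g x)
    (hg : ContDiff ℝ 1 g)
    (B : ℝ) (hB : 0 < B) (hgrad : ∀ x, ‖gradient g x‖ ≤ B * (‖x‖ ^ (γ - 1) + 1))
    (C : ℝ) (hC : 0 < C) (hglb : ∀ x, C * (‖x‖ ^ γ + 1) ≤ g x) :
    ∃ C₁ > (0:ℝ), ∃ C₂ > (0:ℝ), ∃ h₁ > (0:ℝ), ∀ h ∈ Set.Ioo (0:ℝ) h₁, ∀ x,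
      -C₁ * h * (1 + ‖x‖ ^ γ) ≤ (⨅ y, (g (x - y) + h * W (h⁻¹ • y))) - g x ∧
      (⨅ y, (g (x - y) + h * W (h⁻¹ • y))) - g x ≤ C₂ * h * (‖x‖ ^ (γ - 1) + 1) :=
  hopf_lax_two_sided_bound_general γ hγ W hWpos A hA hW g hg B hB hgrad
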